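/- arXiv:1411.4541 — 3 statements merged into one kernel-verified Lean document; each statement's English description precedes it below -/
import Mathlib

section
/- Let d be prime, χ a Dirichlet character mod d, c ≥ 1 a multiple of d, and r, ℓ₁, ℓ₂ integers. Then ∑_{a₁,a₂ mod c} χ(a₂) S(-a₁a₂, r, c) e((a₁ℓ₁ + a₂ℓ₂)/c) = c ∑*_{a mod c} χ(ℓ₁ a) e(a(r + ℓ₁ℓ₂)/c). -/
open Complex

/-- `e x = exp(2πix)`. -/
noncomputable def e (x : ℝ) : ℂ := Complex.exp (2 * Real.pi * Complex.I * x)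

/-- The Kloosterman sum `S(n, m, c)`. -/
noncomputable def klS (n m : ℤ) (c : ℕ) [NeZero c] : ℂ :=
  ∑ a : (ZMod c)ˣ,
    e (((n * ((a : ZMod c).val : ℤ) + m * (((a⁻¹ : (ZMod c)ˣ) : ZMod c).val : ℤ) : ℤ) : ℝ) / c)

lemma e_int (c : ℕ) [NeZero c] (m : ℤ) :
    e ((m : ℝ) / c) = ZMod.stdAddChar ((m : ZMod c)) := by
  rw [ZMod.stdAddChar_coe, e]
  push_cast
  ring_nf

lemma klS_eq (c : ℕ) [NeZero c] (n m : ℤ) :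
    klS n m c = ∑ x : (ZMod c)ˣ,
      ZMod.stdAddChar ((n : ZMod c) * (x : ZMod c) + (m : ZMod c) * ((x⁻¹ : (ZMod c)ˣ) : ZMod c)) := by
  unfold klS
  refine Finset.sum_congr rfl fun x _ => ?_
  rw [e_int]
  congr 1
  push_cast [ZMod.natCast_val, ZMod.cast_id]
  rfl

theorem stmt_4 (d : ℕ) (hd : Nat.Prime d) (χ : DirichletCharacter ℂ d)
    (c : ℕ) [NeZero c] (hdc : d ∣ c) (r ℓ₁ ℓ₂ : ℤ) :
    ∑ a₁ : ZMod c, ∑ a₂ : ZMod c,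
      χ (ZMod.castHom hdc (ZMod d) a₂) * klS (-(a₁.val * a₂.val : ℤ)) r c *
        e ((((a₁.val : ℤ) * ℓ₁ + (a₂.val : ℤ) * ℓ₂ : ℤ) : ℝ) / c) =
    (c : ℂ) * ∑ a : (ZMod c)ˣ,
      χ ((ℓ₁ : ZMod d) * ZMod.castHom hdc (ZMod d) (a : ZMod c)) *
        e (((((a : ZMod c).val : ℤ) * (r + ℓ₁ * ℓ₂) : ℤ) : ℝ) / c) := by
  classical
  have hψ : (ZMod.stdAddChar (N := c)).IsPrimitive := ZMod.isPrimitive_stdAddChar c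
  set ψ := ZMod.stdAddChar (N := c) with hψdef
  have step1 : ∀ a₁ a₂ : ZMod c,
      χ (ZMod.castHom hdc (ZMod d) a₂) * klS (-(a₁.val * a₂.val : ℤ)) r c *
        e ((((a₁.val : ℤ) * ℓ₁ + (a₂.val : ℤ) * ℓ₂ : ℤ) : ℝ) / c)
      = ∑ x : (ZMod c)ˣ,
          (χ (ZMod.castHom hdc (ZMod d) a₂) *
            ψ ((r : ZMod c) * ((x⁻¹ : (ZMod c)ˣ) : ZMod c) + a₂ * (ℓ₂ : ZMod c))) *
          ψ (a₁ * ((ℓ₁ : ZMod c) - a₂ * (x : ZMod c))) := by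
    intro a₁ a₂
    rw [klS_eq, e_int, Finset.mul_sum, Finset.sum_mul]
    refine Finset.sum_congr rfl fun x _ => ?_
    rw [mul_assoc, mul_assoc, ← ψ.map_add_eq_mul, ← ψ.map_add_eq_mul]
    congr 2
    push_cast [ZMod.natCast_val, ZMod.cast_id]
    ring
  calc
    ∑ a₁ : ZMod c, ∑ a₂ : ZMod c,
      χ (ZMod.castHom hdc (ZMod d) a₂) * klS (-(a₁.val * a₂.val : ℤ)) r c *
        e ((((a₁.val : ℤ) * ℓ₁ + (a₂.val : ℤ) * ℓ₂ : ℤ) : ℝ) / c)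
      = ∑ a₂ : ZMod c, ∑ x : (ZMod c)ˣ,
          (χ (ZMod.castHom hdc (ZMod d) a₂) *
            ψ ((r : ZMod c) * ((x⁻¹ : (ZMod c)ˣ) : ZMod c) + a₂ * (ℓ₂ : ZMod c))) *
          ∑ a₁ : ZMod c, ψ (a₁ * ((ℓ₁ : ZMod c) - a₂ * (x : ZMod c))) := by
        simp_rw [step1]
        rw [Finset.sum_comm]
        refine Finset.sum_congr rfl fun a₂ _ => ?_
        rw [Finset.sum_comm]
        exact Finset.sum_congr rfl fun x _ => (Finset.mul_sum _ _ _).symm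
    _ = ∑ a₂ : ZMod c, ∑ x : (ZMod c)ˣ,
          (χ (ZMod.castHom hdc (ZMod d) a₂) *
            ψ ((r : ZMod c) * ((x⁻¹ : (ZMod c)ˣ) : ZMod c) + a₂ * (ℓ₂ : ZMod c))) *
          (if (ℓ₁ : ZMod c) - a₂ * (x : ZMod c) = 0 then (c : ℂ) else 0) := by
        refine Finset.sum_congr rfl fun a₂ _ => Finset.sum_congr rfl fun x _ => ?_
        rw [AddChar.sum_mulShift _ hψ]
        simp [ZMod.card]
    _ = ∑ x : (ZMod c)ˣ, (c : ℂ) *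
          (χ (ZMod.castHom hdc (ZMod d) ((ℓ₁ : ZMod c) * ((x⁻¹ : (ZMod c)ˣ) : ZMod c))) *
            ψ ((r : ZMod c) * ((x⁻¹ : (ZMod c)ˣ) : ZMod c) +
              ((ℓ₁ : ZMod c) * ((x⁻¹ : (ZMod c)ˣ) : ZMod c)) * (ℓ₂ : ZMod c))) := by
        rw [Finset.sum_comm]
        refine Finset.sum_congr rfl fun x _ => ?_
        rw [Finset.sum_eq_single ((ℓ₁ : ZMod c) * ((x⁻¹ : (ZMod c)ˣ) : ZMod c))]
        · rw [if_pos, mul_comm]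
          rw [mul_assoc, x.inv_mul, mul_one, sub_self]
        · intro b _ hb
          rw [if_neg, mul_zero]
          intro h
          apply hb
          have hbx : b * (x : ZMod c) = (ℓ₁ : ZMod c) := by linear_combination -h
          calc b = b * ((x : ZMod c) * ((x⁻¹ : (ZMod c)ˣ) : ZMod c)) := by
                    rw [x.mul_inv, mul_one]
            _ = (ℓ₁ : ZMod c) * ((x⁻¹ : (ZMod c)ˣ) : ZMod c) := by
                    rw [← mul_assoc, hbx]
        · intro h; exact absurd (Finset.mem_univ _) h
    _ = (c : ℂ) * ∑ a : (ZMod c)ˣ,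
          χ ((ℓ₁ : ZMod d) * ZMod.castHom hdc (ZMod d) (a : ZMod c)) *
            e (((((a : ZMod c).val : ℤ) * (r + ℓ₁ * ℓ₂) : ℤ) : ℝ) / c) := by
        rw [← Finset.mul_sum]
        congr 1
        refine Fintype.sum_equiv (Equiv.inv (ZMod c)ˣ) _ _ fun x => ?_
        simp only [Equiv.inv_apply]
        rw [e_int]
        congr 1
        · rw [map_mul, map_intCast]
        · congr 1
          push_cast [ZMod.natCast_val, ZMod.cast_id]
          ring
end

section
/- The improper integral ∫_0^∞ e^{−t} log|1−t| dt converges and equals −Ei(1)/e. -/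
open MeasureTheory Set Filter Topology

local notation "γ" => Real.eulerMascheroniConstant

lemma integrableOn_log_Ioc : IntegrableOn Real.log (Set.Ioc (0:ℝ) 1) := by
  have h : IntegrableOn (fun x : ℝ => -Real.log x) (Set.Ioc (0:ℝ) 1) := by
    apply intervalIntegral.integrableOn_deriv_of_nonneg
      (g := fun x => x - x * Real.log x)
    · exact (continuous_id.sub Real.continuous_mul_log).continuousOn
    · intro x hx
      have h1 : HasDerivAt (fun x : ℝ => x * Real.log x) (Real.log x + 1) x := by
        have := (hasDerivAt_id x).fun_mul (Real.hasDerivAt_log (ne_of_gt hx.1))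
        exact this.congr_deriv (by simp [ne_of_gt hx.1])
      simpa using (hasDerivAt_id x).fun_sub h1
    · intro x hx
      simp only [neg_nonneg]
      exact Real.log_nonpos hx.1.le hx.2.le
  have : IntegrableOn (fun x : ℝ => -(-Real.log x)) (Set.Ioc (0:ℝ) 1) := h.neg
  simpa only [neg_neg] using this


lemma integrableOn_exp_neg_log :
    IntegrableOn (fun t : ℝ => Real.exp (-t) * Real.log t) (Set.Ioi 0) := by
  rw [← Set.Ioc_union_Ioi_eq_Ioi (zero_le_one (α := ℝ))]
  have hm : AEStronglyMeasurable (fun t : ℝ => Real.exp (-t) * Real.log t)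
      (volume.restrict (Set.Ioc (0:ℝ) 1)) :=
    ((Real.measurable_exp.comp measurable_neg).mul Real.measurable_log).aestronglyMeasurable
  have hm2 : AEStronglyMeasurable (fun t : ℝ => Real.exp (-t) * Real.log t)
      (volume.restrict (Set.Ioi (1:ℝ))) :=
    ((Real.measurable_exp.comp measurable_neg).mul Real.measurable_log).aestronglyMeasurable
  refine IntegrableOn.union ?_ ?_
  · refine Integrable.mono' (g := fun t => -Real.log t) ?_ hm ?_
    · exact integrableOn_log_Ioc.neg
    filter_upwards [ae_restrict_mem measurableSet_Ioc] with t ht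
    rw [norm_mul, Real.norm_eq_abs, Real.norm_eq_abs, Real.abs_exp,
      abs_of_nonpos (Real.log_nonpos ht.1.le ht.2)]
    have h1 : Real.exp (-t) ≤ 1 := Real.exp_le_one_iff.mpr (by linarith [ht.1])
    nlinarith [neg_nonneg.mpr (Real.log_nonpos ht.1.le ht.2), Real.exp_pos (-t)]
  · have hbase : IntegrableOn (fun t : ℝ => Real.exp (-t) * t) (Set.Ioi 1) := by
      have := Real.GammaIntegral_convergent (s := 2) (by norm_num)
      have := this.mono_set (Set.Ioi_subset_Ioi zero_le_one)
      refine this.congr_fun ?_ measurableSet_Ioi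
      intro x hx
      norm_num
    refine hbase.mono' hm2 ?_
    filter_upwards [ae_restrict_mem measurableSet_Ioi] with t ht
    have ht1 : (1:ℝ) < t := ht
    have hlog0 : 0 ≤ Real.log t := Real.log_nonneg ht1.le
    have hlogt : Real.log t ≤ t := (Real.log_le_sub_one_of_pos (by linarith)).trans (by linarith)
    rw [norm_mul, Real.norm_eq_abs, Real.norm_eq_abs, Real.abs_exp,
      abs_of_nonneg hlog0]
    have := Real.exp_pos (-t)
    nlinarith

lemma integral_exp_neg_log : ∫ t in Set.Ioi (0:ℝ), Real.exp (-t) * Real.log t = -γ := by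
  have h1 := Complex.hasDerivAt_GammaIntegral (s := 1) (by norm_num)
  have h2 : Complex.GammaIntegral =ᶠ[nhds (1:ℂ)] Complex.Gamma := by
    have hopen : IsOpen {s : ℂ | 0 < s.re} := isOpen_lt continuous_const Complex.continuous_re
    filter_upwards [hopen.mem_nhds (by norm_num : (0:ℝ) < (1:ℂ).re)] with s hs
    exact (Complex.Gamma_eq_integral hs).symm
  have h3 : HasDerivAt Complex.Gamma
      (∫ t : ℝ in Set.Ioi 0, (t:ℂ) ^ ((1:ℂ) - 1) * (Real.log t * Real.exp (-t))) 1 :=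
    h1.congr_of_eventuallyEq h2.symm
  have h4 := h3.unique Complex.hasDerivAt_Gamma_one
  have h5 : (∫ t : ℝ in Set.Ioi 0, (t:ℂ) ^ ((1:ℂ) - 1) * (Real.log t * Real.exp (-t)))
      = ((∫ t : ℝ in Set.Ioi 0, Real.exp (-t) * Real.log t : ℝ) : ℂ) := by
    rw [show (∫ t : ℝ in Set.Ioi 0, (t:ℂ) ^ ((1:ℂ) - 1) * (Real.log t * Real.exp (-t)))
        = ∫ t : ℝ in Set.Ioi 0, ((Real.exp (-t) * Real.log t : ℝ) : ℂ) from
      setIntegral_congr_fun measurableSet_Ioi (fun t ht => by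
        simp only [sub_self, Complex.cpow_zero, one_mul]
        push_cast
        ring)]
    exact integral_ofReal
  rw [h5] at h4
  exact_mod_cast h4

lemma intInt_exp_log : IntervalIntegrable (fun s : ℝ => Real.exp s * Real.log s) volume 0 1 := by
  rw [intervalIntegrable_iff_integrableOn_Ioc_of_le zero_le_one]
  refine Integrable.mono' (g := fun s => 3 * -Real.log s)
    ((integrableOn_log_Ioc.neg).const_mul 3)
    ((Real.measurable_exp.mul Real.measurable_log).aestronglyMeasurable) ?_
  filter_upwards [ae_restrict_mem measurableSet_Ioc] with s hs
  rw [norm_mul, Real.norm_eq_abs, Real.norm_eq_abs, Real.abs_exp,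
    abs_of_nonpos (Real.log_nonpos hs.1.le hs.2)]
  have h1 : Real.exp s ≤ 3 :=
    le_trans (Real.exp_le_exp.mpr hs.2) (by linarith [Real.exp_one_lt_d9])
  nlinarith [neg_nonneg.mpr (Real.log_nonpos hs.1.le hs.2), Real.exp_pos s]

lemma intInt_q : IntervalIntegrable (fun s : ℝ => (Real.exp s - 1)/s) volume 0 1 := by
  rw [intervalIntegrable_iff_integrableOn_Ioc_of_le zero_le_one]
  refine Integrable.mono' (g := fun _ => (3:ℝ))
    (integrableOn_const measure_Ioc_lt_top.ne)
    (((Real.measurable_exp.sub measurable_const).div measurable_id).aestronglyMeasurable) ?_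
  filter_upwards [ae_restrict_mem measurableSet_Ioc] with s hs
  have hs0 : 0 < s := hs.1
  have h1 : 1 - s ≤ Real.exp (-s) := by
    have := Real.add_one_le_exp (-s); linarith
  have h2 : Real.exp s - 1 ≤ s * Real.exp s := by
    have h3 : Real.exp s * (1 - s) ≤ 1 := by
      calc Real.exp s * (1 - s) ≤ Real.exp s * Real.exp (-s) :=
        mul_le_mul_of_nonneg_left h1 (Real.exp_pos s).le
      _ = 1 := by rw [← Real.exp_add]; simp
    nlinarith
  have h4 : Real.exp s ≤ 3 :=
    le_trans (Real.exp_le_exp.mpr hs.2) (by linarith [Real.exp_one_lt_d9])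
  have h5 : 0 ≤ Real.exp s - 1 := by
    have := Real.add_one_le_exp s; linarith [hs0]
  rw [Real.norm_eq_abs, abs_of_nonneg (div_nonneg h5 hs0.le), div_le_iff₀ hs0]
  nlinarith

lemma integral_exp_log_eq :
    ∫ s in (0:ℝ)..1, Real.exp s * Real.log s = -∫ s in (0:ℝ)..1, (Real.exp s - 1)/s := by
  have key : ∫ s in (0:ℝ)..1, (Real.exp s * Real.log s + (Real.exp s - 1)/s) = 0 := by
    have h := intervalIntegral.integral_eq_sub_of_hasDerivAt_of_tendsto (a := (0:ℝ)) (b := 1)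
      (f := fun s => (Real.exp s - 1) * Real.log s)
      (f' := fun s => Real.exp s * Real.log s + (Real.exp s - 1)/s)
      (fa := 0) (fb := 0) zero_lt_one ?_ ?_ ?_ ?_
    · rw [h]; ring
    · intro x hx
      have := ((Real.hasDerivAt_exp x).sub_const 1).fun_mul (Real.hasDerivAt_log hx.1.ne')
      exact this.congr_deriv (by ring)
    · exact intInt_exp_log.add intInt_q
    · have h1 : Tendsto (fun s : ℝ => (Real.exp s - 1)/s) (𝓝[>] 0) (𝓝 1) := by
        have h0 := hasDerivAt_iff_tendsto_slope.mp (Real.hasDerivAt_exp 0)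
        rw [Real.exp_zero] at h0
        have h0' := h0.mono_left
          (nhdsWithin_mono 0 (fun x (hx : x ∈ Set.Ioi (0:ℝ)) => hx.ne' : Set.Ioi (0:ℝ) ⊆ {0}ᶜ))
        refine h0'.congr' ?_
        filter_upwards [self_mem_nhdsWithin] with s (hs : (0:ℝ) < s)
        rw [slope_def_field, Real.exp_zero]
        ring
      have h2 : Tendsto (fun s : ℝ => s * Real.log s) (𝓝[>] 0) (𝓝 0) := by
        have := (Real.continuous_mul_log.tendsto 0).mono_left (nhdsWithin_le_nhds (s := Set.Ioi (0:ℝ)))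
        simpa using this
      have h3 := h1.mul h2
      rw [one_mul] at h3
      refine h3.congr' ?_
      filter_upwards [self_mem_nhdsWithin] with s (hs : (0:ℝ) < s)
      field_simp
    · have hc : ContinuousAt (fun s : ℝ => (Real.exp s - 1) * Real.log s) 1 :=
        ((Real.continuous_exp.sub continuous_const).continuousAt).mul
          (Real.continuousAt_log one_ne_zero)
      have := hc.tendsto.mono_left (nhdsWithin_le_nhds (s := Set.Iio (1:ℝ)))
      simpa using this
  rw [intervalIntegral.integral_add intInt_exp_log intInt_q] at key
  linarith

/-- The exponential integral `Ei(x) = ∫₀ˣ (eᵗ−1)/t dt + log|x| + γ`. -/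
noncomputable def Ei (x : ℝ) : ℝ :=
  (∫ t in (0:ℝ)..x, (Real.exp t - 1) / t) + Real.log |x| + Real.eulerMascheroniConstant

/-- The improper integral `∫₀^∞ e^{−t} log|1−t| dt` converges and equals `−Ei(1)/e`. -/
theorem stmt_13 :
    IntegrableOn (fun t : ℝ => Real.exp (-t) * Real.log |1 - t|) (Set.Ioi 0) ∧
    (∫ t in Set.Ioi (0:ℝ), Real.exp (-t) * Real.log |1 - t|) = -(Ei 1) / Real.exp 1 := by
  set g : ℝ → ℝ := fun t => Real.exp (-t) * Real.log |1 - t| with hg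
  have hgm : Measurable g :=
    (Real.measurable_exp.comp measurable_neg).mul
      (Real.measurable_log.comp ((measurable_const.sub measurable_id).abs))
  -- integrability on Ioc 0 1
  have hlog1t : IntegrableOn (fun t : ℝ => Real.log (1 - t)) (Set.Ioc (0:ℝ) 1) := by
    have h0 : IntervalIntegrable Real.log volume 0 1 :=
      (intervalIntegrable_iff_integrableOn_Ioc_of_le zero_le_one).mpr integrableOn_log_Ioc
    have h1 := (h0.comp_sub_left 1).symm
    simp only [sub_zero, sub_self] at h1
    exact (intervalIntegrable_iff_integrableOn_Ioc_of_le zero_le_one).mp h1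
  have hint1 : IntegrableOn g (Set.Ioc (0:ℝ) 1) := by
    refine Integrable.mono' hlog1t.abs hgm.aestronglyMeasurable ?_
    filter_upwards [ae_restrict_mem measurableSet_Ioc] with t ht
    have habs : |1 - t| = 1 - t := abs_of_nonneg (by linarith [ht.2])
    rw [hg, Real.norm_eq_abs, abs_mul, Real.abs_exp, habs]
    have h1 : Real.exp (-t) ≤ 1 := Real.exp_le_one_iff.mpr (by linarith [ht.1])
    nlinarith [abs_nonneg (Real.log (1 - t)), Real.exp_pos (-t)]
  -- integrability on Ioi 1
  have hemb : MeasurableEmbedding (fun x : ℝ => x + 1) :=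
    (Homeomorph.addRight (1:ℝ)).isClosedEmbedding.measurableEmbedding
  have hmp : MeasurePreserving (fun x : ℝ => x + 1) volume volume :=
    measurePreserving_add_right volume 1
  have hpre : (fun x : ℝ => x + 1) ⁻¹' (Set.Ioi 1) = Set.Ioi 0 := by
    ext x; simp
  have hcomp_eq : ∀ x ∈ Set.Ioi (0:ℝ),
      g (x + 1) = Real.exp (-1) * (Real.exp (-x) * Real.log x) := by
    intro x hx
    have : |1 - (x + 1)| = x := by
      rw [show (1:ℝ) - (x + 1) = -x by ring, abs_neg, abs_of_pos hx]
    rw [hg]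
    simp only [this]
    rw [show -(x + 1) = -x + -1 by ring, Real.exp_add]
    ring
  have hint2 : IntegrableOn g (Set.Ioi (1:ℝ)) := by
    have hbase : IntegrableOn (fun x : ℝ => Real.exp (-1) * (Real.exp (-x) * Real.log x))
        (Set.Ioi 0) := integrableOn_exp_neg_log.const_mul (Real.exp (-1))
    have hc : IntegrableOn (g ∘ fun x : ℝ => x + 1)
        ((fun x : ℝ => x + 1) ⁻¹' Set.Ioi 1) := by
      rw [hpre]
      exact IntegrableOn.congr_fun hbase (fun x hx => (hcomp_eq x hx).symm) measurableSet_Ioi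
    exact (hmp.integrableOn_comp_preimage hemb).mp hc
  have hIoi : Set.Ioc (0:ℝ) 1 ∪ Set.Ioi 1 = Set.Ioi 0 := Set.Ioc_union_Ioi_eq_Ioi zero_le_one
  have hint : IntegrableOn g (Set.Ioi 0) := by
    rw [← hIoi]; exact hint1.union hint2
  refine ⟨hint, ?_⟩
  -- split the integral
  rw [← hIoi, setIntegral_union Set.Ioc_disjoint_Ioi_same measurableSet_Ioi hint1 hint2]
  -- value on Ioi 1
  have hval2 : ∫ t in Set.Ioi (1:ℝ), g t = Real.exp (-1) * (-γ) := by
    rw [← hmp.setIntegral_preimage_emb hemb g (Set.Ioi 1), hpre,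
      setIntegral_congr_fun measurableSet_Ioi hcomp_eq, MeasureTheory.integral_const_mul,
      integral_exp_neg_log]
  -- value on Ioc 0 1
  have hval1 : ∫ t in Set.Ioc (0:ℝ) 1, g t
      = Real.exp (-1) * (-∫ s in (0:ℝ)..1, (Real.exp s - 1)/s) := by
    have e1 : ∫ t in Set.Ioc (0:ℝ) 1, g t = ∫ t in (0:ℝ)..1, g t :=
      (intervalIntegral.integral_of_le zero_le_one).symm
    have e2 : ∫ x in (0:ℝ)..1, g (1 - x) = ∫ t in (0:ℝ)..1, g t := by
      have := intervalIntegral.integral_comp_sub_left (a := (0:ℝ)) (b := 1) g 1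
      simpa using this
    have e3 : ∫ x in (0:ℝ)..1, g (1 - x)
        = ∫ x in (0:ℝ)..1, Real.exp (-1) * (Real.exp x * Real.log x) := by
      refine intervalIntegral.integral_congr_ae ?_
      filter_upwards [] with x
      intro hx
      rw [Set.uIoc_of_le zero_le_one] at hx
      have hx0 : 0 < x := hx.1
      rw [hg]
      simp only
      rw [show (1:ℝ) - (1 - x) = x by ring, abs_of_pos hx0,
        show -(1 - x) = x + -1 by ring, Real.exp_add]
      ring
    rw [e1, ← e2, e3, intervalIntegral.integral_const_mul, integral_exp_log_eq]
  rw [hval1, hval2, Ei]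
  rw [abs_one, Real.log_one, Real.exp_neg]
  have hE := Real.exp_pos 1
  field_simp
  ring
end

section
/- Let d ≡ 1 (mod 4) be prime and χ the real quadratic character mod d. For c with d | c, write c = c'd^{1+j} with gcd(c', d) = 1, j ≥ 0. Then for q, ℓ coprime to d (with ℓ = ℓ₃ℓ₂, gcd(ℓ₃ℓ₂, d)=1) and any k ≥ 0, we have ∑*_{a mod d^{2+j}} χ(a) e((d^{k+1} q c̄' ā + ℓ c̄' a)/d^{2+j}) = 0, where bars denote modular inverses. -/
open Complex

lemma e_add (x y : ℝ) : e (x + y) = e x * e y := by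
  unfold e; rw [← Complex.exp_add]; push_cast; ring_nf

lemma e_int_s18 (n : ℤ) : e n = 1 := by
  unfold e
  simpa [mul_comm] using Complex.exp_int_mul_two_pi_mul_I n

lemma e_pow (x : ℝ) (n : ℕ) : (e x) ^ n = e (n * x) := by
  unfold e; rw [← Complex.exp_nat_mul]; push_cast; ring_nf

lemma e_eq_of_zmod {n : ℕ} (hn : 0 < n) {m m' : ℤ} (h : ((m : ZMod n)) = (m' : ZMod n)) :
    e ((m : ℝ) / n) = e ((m' : ℝ) / n) := by
  have hdvd : (n : ℤ) ∣ (m - m') := by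
    rwa [← ZMod.intCast_zmod_eq_zero_iff_dvd, Int.cast_sub, sub_eq_zero]
  obtain ⟨t, ht⟩ := hdvd
  have hm : m = m' + n * t := by omega
  have hn' : (n : ℝ) ≠ 0 := Nat.cast_ne_zero.mpr hn.ne'
  have : (m : ℝ) / n = (m' : ℝ) / n + t := by
    rw [hm]; push_cast; field_simp
  rw [this, e_add, e_int_s18, mul_one]

lemma e_ne_one {d : ℕ} (hd : 0 < d) {m : ℤ} (hm : ¬ (d : ℤ) ∣ m) :
    e ((m : ℝ) / d) ≠ 1 := by
  intro h
  unfold e at h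
  rw [Complex.exp_eq_one_iff] at h
  obtain ⟨t, ht⟩ := h
  have hpi : (2 * (Real.pi : ℂ) * Complex.I) ≠ 0 := by
    simp [Real.pi_ne_zero, Complex.I_ne_zero]
  push_cast at ht
  have h2 : (2 * (Real.pi : ℂ) * Complex.I) * ((m : ℂ) / (d : ℂ)) =
      (2 * (Real.pi : ℂ) * Complex.I) * t := by linear_combination ht
  have h3 : (m : ℂ) / (d : ℂ) = t := mul_left_cancel₀ hpi h2
  have hd' : (d : ℂ) ≠ 0 := Nat.cast_ne_zero.mpr hd.ne'
  rw [div_eq_iff hd'] at h3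
  have : m = t * d := by exact_mod_cast h3
  exact hm ⟨t, by rw [this, mul_comm]⟩

theorem sum_e_eq_zero (d : ℕ) [NeZero d] (hd : 1 < d) (m : ℤ) (hm : ¬ (d : ℤ) ∣ m) :
    ∑ u : ZMod d, e (((m * (u.val : ℤ) : ℤ) : ℝ) / d) = 0 := by
  set ζ := e ((m : ℝ) / d) with hζ
  have hterm : ∀ u : ZMod d, e (((m * (u.val : ℤ) : ℤ) : ℝ) / d) = ζ ^ u.val := by
    intro u
    rw [e_pow]
    congr 1
    push_cast
    ring
  rw [Finset.sum_congr rfl (fun u _ => hterm u)]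
  have hbij : ∑ u : ZMod d, ζ ^ u.val = ∑ i ∈ Finset.range d, ζ ^ i := by
    refine Finset.sum_nbij' (fun u => u.val) (fun i => (i : ZMod d)) ?_ ?_ ?_ ?_ ?_
    · intro u _; exact Finset.mem_range.mpr (ZMod.val_lt u)
    · intro i _; exact Finset.mem_univ _
    · intro u _; simp [ZMod.natCast_val, ZMod.cast_id]
    · intro i hi; exact ZMod.val_cast_of_lt (Finset.mem_range.mp hi)
    · intro u _; rfl
  rw [hbij, geom_sum_eq (e_ne_one (by omega) hm)]
  have hzd : ζ ^ d = 1 := by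
    rw [e_pow]
    have : (d : ℝ) * ((m : ℝ) / d) = (m : ℝ) := by
      field_simp
    rw [this, e_int_s18]
  rw [hzd, sub_self, zero_div]

set_option maxHeartbeats 1000000 in
theorem aux_sum (d : ℕ) [Fact (Nat.Prime d)] (j : ℕ) (χ : DirichletCharacter ℂ d) (A B : ℤ)
    (hA : (d : ℤ) ∣ A) (hB : ¬ (d : ℤ) ∣ B) :
    ∑ a : (ZMod (d ^ (2 + j)))ˣ,
      χ (ZMod.castHom (dvd_pow_self d (by omega)) (ZMod d) (a : ZMod (d ^ (2 + j)))) *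
        e ((((A * ((((a⁻¹ : (ZMod (d ^ (2 + j)))ˣ) : ZMod (d ^ (2 + j))).val : ℤ))
            + B * (((a : ZMod (d ^ (2 + j))).val : ℤ)) : ℤ)) : ℝ) / (d ^ (2 + j))) = 0 := by
  have hp : Nat.Prime d := Fact.out
  have hd1 : 1 < d := hp.one_lt
  set N := d ^ (2 + j) with hN
  haveI : NeZero N := ⟨pow_ne_zero _ hp.pos.ne'⟩
  haveI : NeZero d := ⟨hp.pos.ne'⟩
  have hNpos : 0 < N := Nat.pos_of_ne_zero (NeZero.ne N)
  have hden : ((d : ℝ)) ^ (2 + j) = (N : ℝ) := by rw [hN]; push_cast; ring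
  simp only [hden]
  set F : (ZMod N)ˣ → ℂ := fun a =>
      χ (ZMod.castHom (dvd_pow_self d (by omega)) (ZMod d) (a : ZMod N)) *
        e ((((A * ((((a⁻¹ : (ZMod N)ˣ) : ZMod N).val : ℤ))
            + B * (((a : ZMod N).val : ℤ)) : ℤ)) : ℝ) / N) with hF
  show ∑ a : (ZMod N)ˣ, F a = 0
  -- powers of d vanish
  have hdpow : ((d : ZMod N)) ^ (2 + j) = 0 := by
    have h0 : ((d ^ (2 + j) : ℕ) : ZMod N) = 0 := by
      rw [← hN]; exact ZMod.natCast_self N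
    push_cast at h0; exact h0
  have hx2 : ∀ u : ZMod d, ((u.val : ZMod N) * (d : ZMod N) ^ (1 + j)) ^ 2 = 0 := by
    intro u
    have hh : ((u.val : ZMod N) * (d : ZMod N) ^ (1 + j)) ^ 2
        = ((u.val : ZMod N)) ^ 2 * (d : ZMod N) ^ j * ((d : ZMod N) ^ (2 + j)) := by
      ring
    rw [hh, hdpow, mul_zero]
  -- the units 1 + u d^{1+j}
  set W : ZMod d → (ZMod N)ˣ := fun u =>
    Units.mkOfMulEqOne (1 + (u.val : ZMod N) * (d : ZMod N) ^ (1 + j))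
      (1 - (u.val : ZMod N) * (d : ZMod N) ^ (1 + j))
      (by linear_combination -(hx2 u)) with hWdef
  have hWval : ∀ u, ((W u : (ZMod N)ˣ) : ZMod N)
      = 1 + (u.val : ZMod N) * (d : ZMod N) ^ (1 + j) := fun u => rfl
  have hWinv : ∀ u, (((W u)⁻¹ : (ZMod N)ˣ) : ZMod N)
      = 1 - (u.val : ZMod N) * (d : ZMod N) ^ (1 + j) := fun u => rfl
  -- key transformation
  have key : ∀ (u : ZMod d) (a : (ZMod N)ˣ), F (a * W u)
      = F a * e ((((B * (((a : ZMod N)).val : ℤ)) * ((u.val : ℤ)) : ℤ) : ℝ) / d) := by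
    intro u a
    obtain ⟨A', rfl⟩ := hA
    have hχ : χ (ZMod.castHom (dvd_pow_self d (by omega)) (ZMod d) ((a * W u : (ZMod N)ˣ) : ZMod N))
        = χ (ZMod.castHom (dvd_pow_self d (by omega)) (ZMod d) ((a : (ZMod N)ˣ) : ZMod N)) := by
      congr 1
      simp [Units.val_mul, hWval, map_add, map_mul, map_pow, map_natCast,
        ZMod.natCast_self, zero_pow, mul_add]
    have harg : ((((d : ℤ) * A') * (((((a * W u)⁻¹ : (ZMod N)ˣ) : ZMod N)).val : ℤ)
          + B * ((((a * W u : (ZMod N)ˣ) : ZMod N)).val : ℤ) : ℤ) : ZMod N)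
        = ((((d : ℤ) * A') * ((((a⁻¹ : (ZMod N)ˣ) : ZMod N)).val : ℤ) + B * (((a : ZMod N)).val : ℤ)
            + (B * (((a : ZMod N)).val : ℤ)) * (u.val : ℤ) * (d : ℤ) ^ (1 + j) : ℤ) : ZMod N) := by
      have hx2' := hx2 u
      push_cast [ZMod.natCast_val, ZMod.cast_id, ZMod.intCast_cast] at hx2' ⊢
      simp only [Units.val_mul, mul_inv_rev, hWval, hWinv]
      push_cast [ZMod.natCast_val, ZMod.cast_id, ZMod.intCast_cast]
      linear_combination (-(A' : ZMod N) * ((a⁻¹ : (ZMod N)ˣ) : ZMod N)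
        * (ZMod.cast u : ZMod N)) * hdpow
    have hsplit : (((((d : ℤ) * A') * ((((a⁻¹ : (ZMod N)ˣ) : ZMod N)).val : ℤ) + B * (((a : ZMod N)).val : ℤ)
            + (B * (((a : ZMod N)).val : ℤ)) * (u.val : ℤ) * (d : ℤ) ^ (1 + j) : ℤ)) : ℝ) / N
        = ((((d : ℤ) * A') * ((((a⁻¹ : (ZMod N)ˣ) : ZMod N)).val : ℤ) + B * (((a : ZMod N)).val : ℤ) : ℤ) : ℝ) / N
          + (((B * (((a : ZMod N)).val : ℤ)) * (u.val : ℤ) : ℤ) : ℝ) / d := by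
      have hNreal : (N : ℝ) = (d : ℝ) ^ (1 + j) * d := by
        rw [hN]; push_cast
        rw [show (2 + j) = (1 + j) + 1 by omega, pow_succ]
      have hd0 : (d : ℝ) ≠ 0 := Nat.cast_ne_zero.mpr hp.pos.ne'
      rw [hNreal]; push_cast
      field_simp
    have he : e ((((((d : ℤ) * A') * (((((a * W u)⁻¹ : (ZMod N)ˣ) : ZMod N)).val : ℤ)
          + B * ((((a * W u : (ZMod N)ˣ) : ZMod N)).val : ℤ)) : ℤ) : ℝ) / N)
        = e (((((d : ℤ) * A') * ((((a⁻¹ : (ZMod N)ˣ) : ZMod N)).val : ℤ) + B * (((a : ZMod N)).val : ℤ) : ℤ) : ℝ) / N)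
          * e ((((B * (((a : ZMod N)).val : ℤ)) * (u.val : ℤ) : ℤ) : ℝ) / d) := by
      rw [e_eq_of_zmod hNpos harg, hsplit, e_add]
    simp only [hF]
    rw [hχ, he]
    push_cast
    ring_nf
  -- the inner sum vanishes
  have inner : ∀ a : (ZMod N)ˣ, ∑ u : ZMod d, F (a * W u) = 0 := by
    intro a
    have hm : ¬ (d : ℤ) ∣ B * (((a : ZMod N)).val : ℤ) := by
      intro h
      have h0 : ((B * (((a : ZMod N)).val : ℤ) : ℤ) : ZMod d) = 0 :=
        (ZMod.intCast_zmod_eq_zero_iff_dvd _ d).mpr h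
      have hB' : ((B : ℤ) : ZMod d) ≠ 0 := by
        rwa [Ne, ZMod.intCast_zmod_eq_zero_iff_dvd]
      have ha' : ((((a : ZMod N)).val : ZMod d)) ≠ 0 := by
        rw [ZMod.natCast_val]
        exact ((a.isUnit).map (ZMod.castHom (dvd_pow_self d (by omega : 2 + j ≠ 0)) (ZMod d))).ne_zero
      push_cast at h0
      rcases mul_eq_zero.mp h0 with h' | h'
      · exact hB' h'
      · exact ha' h'
    calc ∑ u : ZMod d, F (a * W u)
        = ∑ u : ZMod d, F a * e ((((B * (((a : ZMod N)).val : ℤ)) * ((u.val : ℤ)) : ℤ) : ℝ) / d) :=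
          Finset.sum_congr rfl fun u _ => key u a
      _ = F a * ∑ u : ZMod d, e ((((B * (((a : ZMod N)).val : ℤ)) * ((u.val : ℤ)) : ℤ) : ℝ) / d) := by
          rw [Finset.mul_sum]
      _ = 0 := by rw [sum_e_eq_zero d hd1 _ hm, mul_zero]
  -- average over u
  have hdC : ((d : ℂ)) ≠ 0 := Nat.cast_ne_zero.mpr hp.pos.ne'
  have hfinal : (d : ℂ) * ∑ a : (ZMod N)ˣ, F a = 0 := by
    calc (d : ℂ) * ∑ a : (ZMod N)ˣ, F a
        = ∑ _u : ZMod d, ∑ a : (ZMod N)ˣ, F a := by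
          rw [Finset.sum_const, Finset.card_univ, ZMod.card, nsmul_eq_mul]
      _ = ∑ u : ZMod d, ∑ a : (ZMod N)ˣ, F (a * W u) := by
          refine Finset.sum_congr rfl fun u _ => ?_
          exact (Equiv.sum_comp (Equiv.mulRight (W u)) F).symm
      _ = ∑ a : (ZMod N)ˣ, ∑ u : ZMod d, F (a * W u) := Finset.sum_comm
      _ = 0 := by simp [inner]
  exact (mul_eq_zero.mp hfinal).resolve_left hdC

set_option maxHeartbeats 1000000 in
/-- Vanishing of the twisted complete exponential sum
`∑*_{a mod d^{2+j}} χ(a) e((d^{k+1} q c̄' ā + ℓ c̄' a)/d^{2+j}) = 0`, for `χ` the real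
quadratic character mod the prime `d ≡ 1 (mod 4)` and `q, ℓ, c'` coprime to `d`. -/
theorem stmt_18 (d : ℕ) [Fact (Nat.Prime d)] (hd4 : d % 4 = 1)
    (χ : DirichletCharacter ℂ d) (hχ2 : χ ^ 2 = 1) (hχ1 : χ ≠ 1)
    (j k : ℕ) (c' : ℕ) (hc' : Nat.Coprime c' d)
    (q ℓ : ℤ) (hq : IsCoprime q (d : ℤ)) (hℓ : IsCoprime ℓ (d : ℤ)) :
    ∑ a : (ZMod (d ^ (2 + j)))ˣ,
      χ (ZMod.castHom (dvd_pow_self d (by omega)) (ZMod d) (a : ZMod (d ^ (2 + j)))) *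
        e ((((d : ℤ) ^ (k + 1) * q *
              ((((c' : ZMod (d ^ (2 + j)))⁻¹).val : ℤ)) *
              ((((a⁻¹ : (ZMod (d ^ (2 + j)))ˣ) : ZMod (d ^ (2 + j))).val : ℤ))
            + ℓ * ((((c' : ZMod (d ^ (2 + j)))⁻¹).val : ℤ)) *
              (((a : ZMod (d ^ (2 + j))).val : ℤ)) : ℤ) : ℝ) / (d ^ (2 + j))) = 0 := by
  have hp : Nat.Prime d := Fact.out
  haveI : NeZero (d ^ (2 + j)) := ⟨pow_ne_zero _ hp.pos.ne'⟩
  have hd1 : 1 < d := hp.one_lt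
  have hB : ¬ (d : ℤ) ∣ ℓ * ((((c' : ZMod (d ^ (2 + j)))⁻¹).val : ℤ)) := by
    intro h
    have h0 := (ZMod.intCast_zmod_eq_zero_iff_dvd _ d).mpr h
    push_cast at h0
    have hℓ' : ((ℓ : ℤ) : ZMod d) ≠ 0 := by
      rw [Ne, ZMod.intCast_zmod_eq_zero_iff_dvd]
      intro hdl
      have : IsUnit ((d : ℤ)) := hℓ.isUnit_of_dvd' hdl dvd_rfl
      rcases Int.isUnit_iff.mp this with h' | h' <;> omega
    have h1 : (c' : ZMod (d ^ (2 + j))) * (c' : ZMod (d ^ (2 + j)))⁻¹ = 1 :=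
      ZMod.coe_mul_inv_eq_one c' (hc'.pow_right _)
    have h2 := congrArg (ZMod.castHom (dvd_pow_self d (by omega : 2 + j ≠ 0)) (ZMod d)) h1
    rw [map_mul, map_natCast, map_one] at h2
    have hc : ((((c' : ZMod (d ^ (2 + j)))⁻¹).val : ℕ) : ZMod d) ≠ 0 := by
      rw [ZMod.natCast_val, ← ZMod.castHom_apply (h := dvd_pow_self d (by omega : 2 + j ≠ 0))]
      exact (IsUnit.of_mul_eq_one (c' : ZMod d) (by rwa [mul_comm] at h2)).ne_zero
    rcases mul_eq_zero.mp h0 with h' | h'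
    · exact hℓ' h'
    · exact hc h'
  have hA : (d : ℤ) ∣ (d : ℤ) ^ (k + 1) * q * ((((c' : ZMod (d ^ (2 + j)))⁻¹).val : ℤ)) :=
    ((dvd_pow_self (d : ℤ) (Nat.succ_ne_zero k)).mul_right q).mul_right _
  exact aux_sum d j χ
    ((d : ℤ) ^ (k + 1) * q * ((((c' : ZMod (d ^ (2 + j)))⁻¹).val : ℤ)))
    (ℓ * ((((c' : ZMod (d ^ (2 + j)))⁻¹).val : ℤ))) hA hB
end
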